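/- Existence and uniqueness of the symmetric Sinkhorn potential: assume the kernel matrix K = (exp(−c_{ij}/2))_{i,j} is positive definite. Then for every α ∈ △^d there exists a unique f ∈ ℝ^d satisfying the symmetric fixed-point equation −f = T(−f, α), i.e. f_i = 2 log Σ_{j=1}^d α_j exp(−(f_j + c_{ij})/2) for all i ∈ [d]. -/

import Mathlib

open Finset Real Filter

noncomputable section

/-- The probability simplex in `ℝ^d`. -/
def simplexS (d : ℕ) : Set (Fin d → ℝ) := stdSimplex ℝ (Fin d)


open scoped Classical

/-- `Φ_C(α,f) = Σ_{i,j} α_i α_j exp(-(f_i + f_j + c_{ij})/2)`. -/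
def Phi {d : ℕ} (C : Matrix (Fin d) (Fin d) ℝ) (α f : Fin d → ℝ) : ℝ :=
  ∑ i, ∑ j, α i * α j * Real.exp (-(f i + f j + C i j) / 2)

/-- The geometric log-sum-exp `Ω_C^*(f) = -log min_{α ∈ △^d} Φ_C(α, f)`. -/
def OmegaStar {d : ℕ} (C : Matrix (Fin d) (Fin d) ℝ) (f : Fin d → ℝ) : ℝ :=
  -Real.log (sInf ((fun α => Phi C α f) '' simplexS d))

/-- The geometric softmax: the (unique, when the kernel is positive definite) minimizer of
`Φ_C(·, f)` over the simplex. -/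
def gsoftmax {d : ℕ} (C : Matrix (Fin d) (Fin d) ℝ) (f : Fin d → ℝ) : Fin d → ℝ :=
  if h : ∃ α ∈ simplexS d, IsMinOn (fun β => Phi C β f) (simplexS d) α
  then h.choose else fun _ => 0

/-- The soft C-transform `T(f,α)_i = -2 log Σ_j α_j exp((f_j - c_{ij})/2)`. -/
def Tsoft {d : ℕ} (C : Matrix (Fin d) (Fin d) ℝ) (f α : Fin d → ℝ) : Fin d → ℝ :=
  fun i => -2 * Real.log (∑ j, α j * Real.exp ((f j - C i j) / 2))

/-- `f` is the symmetric Sinkhorn potential of `α`: `-f = T(-f, α)`. -/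
def IsSinkhornPotential {d : ℕ} (C : Matrix (Fin d) (Fin d) ℝ) (α f : Fin d → ℝ) : Prop :=
  -f = Tsoft C (-f) α

/-- The symmetric Sinkhorn potential `∇Ω(α)`: the (unique, when the kernel is positive
definite) `f` with `-f = T(-f, α)`. -/
def gradOmega {d : ℕ} (C : Matrix (Fin d) (Fin d) ℝ) (α : Fin d → ℝ) : Fin d → ℝ :=
  if h : ∃ f : Fin d → ℝ, IsSinkhornPotential C α f then h.choose else fun _ => 0

/-- The extrapolation `f^E = -T(-(f - Ω_C^*(f)·1), g-softmax(f)) + Ω_C^*(f)·1`. -/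
def extrap {d : ℕ} (C : Matrix (Fin d) (Fin d) ℝ) (f : Fin d → ℝ) : Fin d → ℝ :=
  fun i => -(Tsoft C (fun j => -(f j - OmegaStar C f)) (gsoftmax C f) i) + OmegaStar C f

/-- The kernel matrix `K = (exp(-c_{ij}/2))_{ij}`. -/
def kernelK {d : ℕ} (C : Matrix (Fin d) (Fin d) ℝ) : Matrix (Fin d) (Fin d) ℝ :=
  Matrix.of fun i j => Real.exp (-(C i j) / 2)

/-!
Writing `g = exp (f / 2)` and `K = kernelK C`, the fixed-point equation reads `g = K (α / g)`.

Uniqueness: for two positive solutions `g, h`, the vector `z = α / g - α / h` has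
`zᵀ K z = z ⬝ (g - h) = Σ α_i (1 / g_i - 1 / h_i) (g_i - h_i) ≤ 0`, so `z = 0` since `K` is
positive definite, whence `g = K (α / g) = K (α / h) = h`.

Existence: `g = K (α e^u)` is a solution whenever `u` is a critical point of
`E(u) = ½ Σ α_j α_k K_jk e^{u_j + u_k} - Σ α_j u_j` (`K` symmetric). This energy dominates
the sum over `j` of its diagonal terms `½ α_j² K_jj e^{2 u_j} - α_j u_j`, each of which is
coercive in `u_j`, so `E` is coercive and attains its minimum.
-/

open Matrix

theorem eq_two_mul_log_iff {x s : ℝ} (hs : 0 < s) : x = 2 * log s ↔ exp (x / 2) = s := by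
  constructor
  · rintro rfl
    rw [mul_div_cancel_left₀ _ two_ne_zero, exp_log hs]
  · rintro rfl
    rw [log_exp]
    ring

theorem tendsto_mul_exp_add_self_sub_mul_cocompact {c b : ℝ} (hc : 0 < c) (hb : 0 < b) :
    Tendsto (fun t => c * exp (t + t) - b * t) (cocompact ℝ) atTop := by
  rw [cocompact_eq_atBot_atTop, tendsto_sup]
  constructor
  · simp_rw [sub_eq_add_neg, ← neg_mul]
    exact Tendsto.nonneg_add_atTop (fun t => by positivity)
      (tendsto_id.const_mul_atBot_of_neg (neg_neg_of_pos hb))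
  · have hgrow : Tendsto (fun t => exp t * (c * exp t + -b)) atTop atTop :=
      tendsto_exp_atTop.atTop_mul_atTop₀
        (tendsto_atTop_add_const_right _ _ (tendsto_exp_atTop.const_mul_atTop hc))
    refine tendsto_atTop_mono (fun t => ?_) hgrow
    have := add_one_le_exp t
    rw [exp_add]
    nlinarith

theorem tendsto_sum_apply_cocompact {ι : Type*} [Fintype ι] {X : ι → Type*}
    [∀ i, TopologicalSpace (X i)] {h : ∀ i, X i → ℝ}
    (hbdd : ∀ i, BddBelow (Set.range (h i)))
    (hh : ∀ i, Tendsto (h i) (cocompact (X i)) atTop) :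
    Tendsto (fun x => ∑ i, h i (x i)) (cocompact (∀ i, X i)) atTop := by
  rw [← coprodᵢ_cocompact, Filter.coprodᵢ, tendsto_iSup]
  intro i
  choose b hb using hbdd
  have hsplit : (fun x : ∀ i, X i => ∑ j, h j (x j))
      = fun x => ∑ j ∈ Finset.univ.erase i, h j (x j) + h i (x i) :=
    funext fun x => (Finset.sum_erase_add _ _ (Finset.mem_univ i)).symm
  rw [hsplit]
  exact tendsto_atTop_add_left_of_le _ (∑ j ∈ Finset.univ.erase i, b j)
    (fun x => Finset.sum_le_sum fun j _ => hb j ⟨x j, rfl⟩) ((hh i).comp tendsto_comap)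

section

variable {ι : Type*} [Fintype ι]

theorem mulVec_apply_pos {K : Matrix ι ι ℝ} (hK : ∀ i j, 0 < K i j) {x : ι → ℝ}
    (hx : 0 < x) (i : ι) : 0 < (K *ᵥ x) i := by
  obtain ⟨hx0, j, hj⟩ := Pi.lt_def.mp hx
  exact Finset.sum_pos' (fun k _ => mul_nonneg (hK i k).le (hx0 k))
    ⟨j, Finset.mem_univ j, mul_pos (hK i j) hj⟩

theorem eq_of_eq_mulVec_div {K : Matrix ι ι ℝ} (hK : K.PosDef) {α : ι → ℝ}
    (hα : 0 ≤ α) {g h : ι → ℝ} (hg : ∀ i, 0 < g i) (hh : ∀ i, 0 < h i)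
    (hgK : g = K *ᵥ (α / g)) (hhK : h = K *ᵥ (α / h)) : g = h := by
  suffices hz : α / g - α / h = 0 by
    rw [hgK, hhK, sub_eq_zero.mp hz]
  by_contra hz
  have hpos := (posDef_iff_dotProduct_mulVec.mp hK).2 hz
  rw [star_trivial, mulVec_sub, ← hgK, ← hhK] at hpos
  have hnonpos : (α / g - α / h) ⬝ᵥ (g - h) ≤ 0 := by
    refine Finset.sum_nonpos fun i _ => ?_
    have hgi := hg i
    have hhi := hh i
    have : (α i / g i - α i / h i) * (g i - h i)
        = -(α i * (g i - h i) ^ 2 / (g i * h i)) := by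
      field_simp
      ring
    simp only [Pi.sub_apply, Pi.div_apply, this, neg_nonpos]
    exact div_nonneg (mul_nonneg (hα i) (sq_nonneg _)) (mul_pos hgi hhi).le
  linarith

/-- The penalty on the coordinates outside the support of `α` makes the energy coercive without
changing its critical-point equations on the support. -/
def scalingEnergy (K : Matrix ι ι ℝ) (α u : ι → ℝ) : ℝ :=
  (∑ j, ∑ k, α j * α k * K j k * exp (u j + u k)) / 2 - ∑ j, α j * u j
    + ∑ j, if α j = 0 then u j ^ 2 else 0

theorem continuous_scalingEnergy (K : Matrix ι ι ℝ) (α : ι → ℝ) :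
    Continuous (scalingEnergy K α) := by
  have hpen : ∀ j, Continuous fun u : ι → ℝ => if α j = 0 then u j ^ 2 else 0 := fun j => by
    split_ifs <;> fun_prop
  unfold scalingEnergy
  fun_prop

def diagEnergy (a κ t : ℝ) : ℝ :=
  a * a * κ * exp (t + t) / 2 - a * t + if a = 0 then t ^ 2 else 0

theorem sum_diagEnergy_le_scalingEnergy {K : Matrix ι ι ℝ} (hK : ∀ j k, 0 ≤ K j k)
    {α : ι → ℝ} (hα : 0 ≤ α) (u : ι → ℝ) :
    ∑ j, diagEnergy (α j) (K j j) (u j) ≤ scalingEnergy K α u := by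
  have hdiag : ∀ j, α j * α j * K j j * exp (u j + u j)
      ≤ ∑ k, α j * α k * K j k * exp (u j + u k) := fun j =>
    Finset.single_le_sum (f := fun k => α j * α k * K j k * exp (u j + u k))
      (fun k _ => mul_nonneg (mul_nonneg (mul_nonneg (hα j) (hα k)) (hK j k)) (exp_pos _).le)
      (Finset.mem_univ j)
  simp only [scalingEnergy, diagEnergy, Finset.sum_add_distrib, Finset.sum_sub_distrib,
    ← Finset.sum_div]
  gcongr with j
  exact hdiag j

theorem continuous_diagEnergy (a κ : ℝ) : Continuous (diagEnergy a κ) := by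
  unfold diagEnergy
  split_ifs <;> fun_prop

theorem tendsto_diagEnergy_cocompact {a κ : ℝ} (ha : 0 ≤ a) (hκ : 0 < κ) :
    Tendsto (diagEnergy a κ) (cocompact ℝ) atTop := by
  rcases ha.eq_or_lt with rfl | ha
  · convert (tendsto_pow_atTop two_ne_zero).comp (tendsto_norm_cocompact_atTop (E := ℝ))
      using 1
    ext t
    simp [diagEnergy]
  · convert tendsto_mul_exp_add_self_sub_mul_cocompact (c := a * a * κ / 2) (by positivity) ha
      using 1
    ext t
    simp only [diagEnergy, ha.ne', if_false]
    ring

theorem tendsto_scalingEnergy_cocompact {K : Matrix ι ι ℝ} (hK : ∀ j k, 0 ≤ K j k)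
    (hKdiag : ∀ j, 0 < K j j) {α : ι → ℝ} (hα : 0 ≤ α) :
    Tendsto (scalingEnergy K α) (cocompact (ι → ℝ)) atTop := by
  refine tendsto_atTop_mono (sum_diagEnergy_le_scalingEnergy hK hα)
    (tendsto_sum_apply_cocompact (fun j => ?_)
      fun j => tendsto_diagEnergy_cocompact (hα j) (hKdiag j))
  obtain ⟨t₀, ht₀⟩ := (continuous_diagEnergy (α j) (K j j)).exists_forall_le
    (tendsto_diagEnergy_cocompact (hα j) (hKdiag j))
  exact ⟨_, Set.forall_mem_range.mpr ht₀⟩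

theorem hasDerivAt_scalingEnergy_line {K : Matrix ι ι ℝ} (hK : K.IsSymm) (α u v : ι → ℝ) :
    HasDerivAt (fun t : ℝ => scalingEnergy K α (u + t • v))
      (∑ j, ∑ k, α j * α k * K j k * exp (u j + u k) * v j - ∑ j, α j * v j
        + ∑ j, if α j = 0 then 2 * u j * v j else 0) 0 := by
  have hline : ∀ j, HasDerivAt (fun t : ℝ => (u + t • v) j) (v j) 0 := fun j => by
    simpa using ((hasDerivAt_id (0 : ℝ)).mul_const (v j)).const_add (u j)
  have hquad : HasDerivAt
      (fun t : ℝ => ∑ j, ∑ k, α j * α k * K j k * exp ((u + t • v) j + (u + t • v) k))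
      (∑ j, ∑ k, α j * α k * K j k * exp (u j + u k) * (v j + v k)) 0 :=
    HasDerivAt.fun_sum fun j _ => HasDerivAt.fun_sum fun k _ => by
      simpa [mul_assoc] using ((hline j).add (hline k)).exp.const_mul (α j * α k * K j k)
  have hpen : ∀ j, HasDerivAt (fun t : ℝ => if α j = 0 then (u + t • v) j ^ 2 else 0)
      (if α j = 0 then 2 * u j * v j else 0) 0 := fun j => by
    split_ifs
    · simpa [mul_comm] using (hline j).fun_pow 2
    · exact hasDerivAt_const _ _
  have hsymm : ∑ j, ∑ k, α j * α k * K j k * exp (u j + u k) * v k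
      = ∑ j, ∑ k, α j * α k * K j k * exp (u j + u k) * v j := by
    rw [Finset.sum_comm]
    refine Finset.sum_congr rfl fun j _ => Finset.sum_congr rfl fun k _ => ?_
    rw [hK.apply j k, add_comm (u k)]
    ring
  have hlin := HasDerivAt.fun_sum (u := Finset.univ) fun j _ => (hline j).const_mul (α j)
  refine (((hquad.div_const 2).sub hlin).add (HasDerivAt.fun_sum fun j _ => hpen j)).congr_deriv ?_
  congr 2
  simp only [mul_add, Finset.sum_add_distrib, hsymm]
  ring

theorem exp_mul_mulVec_eq_one_of_forall_le {K : Matrix ι ι ℝ} (hK : K.IsSymm)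
    {α u : ι → ℝ} (hu : ∀ w, scalingEnergy K α u ≤ scalingEnergy K α w) {i : ι}
    (hi : α i ≠ 0) :
    exp (u i) * (K *ᵥ fun j => α j * exp (u j)) i = 1 := by
  have hmin : IsLocalMin (fun t : ℝ => scalingEnergy K α (u + t • Pi.single i 1)) 0 :=
    Eventually.of_forall fun t => by simpa using hu _
  have hzero := hmin.hasDerivAt_eq_zero (hasDerivAt_scalingEnergy_line hK α u (Pi.single i 1))
  have hpen :
      ∑ j, (if α j = 0 then 2 * u j * Pi.single (M := fun _ => ℝ) i 1 j else 0) = 0 :=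
    Finset.sum_eq_zero fun j _ => by rcases eq_or_ne j i with rfl | hj <;> simp [*]
  rw [hpen, add_zero, sub_eq_zero] at hzero
  simp only [Pi.single_apply, mul_ite, mul_one, mul_zero, Finset.sum_ite_irrel,
    Finset.sum_const_zero, Finset.sum_ite_eq', Finset.mem_univ, if_true] at hzero
  refine mul_left_cancel₀ hi ?_
  calc α i * (exp (u i) * (K *ᵥ fun j => α j * exp (u j)) i)
      = ∑ k, α i * α k * K i k * exp (u i + u k) := by
        simp only [mulVec, dotProduct, Finset.mul_sum, exp_add]
        exact Finset.sum_congr rfl fun k _ => by ring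
    _ = α i * 1 := by rw [hzero, mul_one]

theorem exists_eq_mulVec_div {K : Matrix ι ι ℝ} (hKs : K.IsSymm) (hK : ∀ i j, 0 < K i j)
    {α : ι → ℝ} (hα : 0 < α) :
    ∃ g : ι → ℝ, (∀ i, 0 < g i) ∧ g = K *ᵥ (α / g) := by
  obtain ⟨u, hu⟩ := (continuous_scalingEnergy K α).exists_forall_le
    (tendsto_scalingEnergy_cocompact (fun j k => (hK j k).le) (fun j => hK j j) hα.le)
  set w : ι → ℝ := fun j => α j * exp (u j) with hw_def
  have hw : 0 < w := by
    obtain ⟨hα0, j, hj⟩ := Pi.lt_def.mp hα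
    exact Pi.lt_def.mpr
      ⟨fun j => mul_nonneg (hα0 j) (exp_pos _).le, j, mul_pos hj (exp_pos _)⟩
  have hg := mulVec_apply_pos hK hw
  suffices hαw : α / K *ᵥ w = w from ⟨K *ᵥ w, hg, by rw [hαw]⟩
  funext j
  rcases eq_or_ne (α j) 0 with h | h
  · simp [w, h]
  · rw [Pi.div_apply, div_eq_iff (hg j).ne', hw_def, mul_assoc,
      exp_mul_mulVec_eq_one_of_forall_le hKs hu h, mul_one]

end

theorem sum_mul_exp_eq_kernelK_mulVec {d : ℕ} (C : Matrix (Fin d) (Fin d) ℝ)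
    (α f : Fin d → ℝ) (i : Fin d) :
    ∑ j, α j * exp (-(f j + C i j) / 2) = (kernelK C *ᵥ (α / fun j => exp (f j / 2))) i := by
  simp only [mulVec, dotProduct, kernelK, of_apply, Pi.div_apply]
  refine Finset.sum_congr rfl fun j _ => ?_
  rw [mul_div_left_comm, ← exp_sub]
  ring_nf

theorem sinkhorn_potential_exists_unique_general (d : ℕ)
    (C : Matrix (Fin d) (Fin d) ℝ)
    (hK : (kernelK C).PosDef) (α : Fin d → ℝ) (hα : α ∈ simplexS d) :
    ∃! f : Fin d → ℝ,
      ∀ i, f i = 2 * Real.log (∑ j, α j * Real.exp (-(f j + C i j) / 2)) := by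
  have hαpos : 0 < α := (show 0 ≤ α from hα.1).lt_of_ne (by rintro rfl; simpa using hα.2)
  have hKpos : ∀ i j, 0 < kernelK C i j := fun i j => exp_pos _
  have hpotential (f : Fin d → ℝ) :
      (∀ i, f i = 2 * log (∑ j, α j * exp (-(f j + C i j) / 2))) ↔
        (fun i => exp (f i / 2)) = kernelK C *ᵥ (α / fun i => exp (f i / 2)) := by
    have hdiv : 0 < α / fun i => exp (f i / 2) := by
      obtain ⟨hα0, j, hj⟩ := Pi.lt_def.mp hαpos
      exact Pi.lt_def.mpr
        ⟨fun i => div_nonneg (hα0 i) (exp_pos _).le, j, div_pos hj (exp_pos _)⟩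
    simp only [sum_mul_exp_eq_kernelK_mulVec, funext_iff]
    exact forall_congr' fun i => eq_two_mul_log_iff (mulVec_apply_pos hKpos hdiv i)
  obtain ⟨g, hgpos, hg⟩ :=
    exists_eq_mulVec_div (isHermitian_iff_isSymm.mp hK.isHermitian) hKpos hαpos
  have hexp_log : (fun i => exp (2 * log (g i) / 2)) = g :=
    funext fun i => (eq_two_mul_log_iff (hgpos i)).mp rfl
  refine ⟨fun i => 2 * log (g i), (hpotential _).2 (by rw [hexp_log]; exact hg), fun f hf => ?_⟩
  have hfg :=
    eq_of_eq_mulVec_div hK hαpos.le (fun i => exp_pos _) hgpos ((hpotential f).1 hf) hg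
  exact funext fun i => (eq_two_mul_log_iff (hgpos i)).mpr (congrFun hfg i)

/-- Existence and uniqueness of the symmetric Sinkhorn potential: when the kernel
`K = (exp(-c_{ij}/2))` is positive definite, for every `α ∈ △^d` there exists a unique
`f ∈ ℝ^d` with `-f = T(-f, α)`, i.e. `f_i = 2 log Σ_j α_j exp(-(f_j + c_{ij})/2)` for all
`i`. -/
theorem sinkhorn_potential_exists_unique (d : ℕ) (hd : 1 ≤ d)
    (C : Matrix (Fin d) (Fin d) ℝ) (hCsym : C.IsSymm) (hCdiag : ∀ i, C i i = 0)
    (hK : (kernelK C).PosDef) (α : Fin d → ℝ) (hα : α ∈ simplexS d) :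
    ∃! f : Fin d → ℝ,
      ∀ i, f i = 2 * Real.log (∑ j, α j * Real.exp (-(f j + C i j) / 2)) :=
  sinkhorn_potential_exists_unique_general d C hK α hα
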